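/- For n ≥ 3, the operator LT on (ℝ³)^{⊗n} has 1 as an eigenvalue, its eigenspace {x : LT·x = x} equals span{v₁₂^{⊗n}, v₁₃^{⊗n}} (in particular the eigenvalue 1 has geometric multiplicity 2), and every complex eigenvalue λ of LT with λ ≠ 1 satisfies |λ| < 1. -/

import Mathlib

open Matrix

/-- The blocks `B₁, B₂, B₃` of `EM`. -/
noncomputable def Bblk : Fin 3 → Matrix (Fin 3) (Fin 3) ℝ :=
  ![(1 / 4 : ℝ) • !![3, 1, 1; 1, 3, -1; 1, -1, 3],
    (1 / 4 : ℝ) • !![1, 3, 0; 3, 1, 0; -1, 1, 0],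
    (1 / 4 : ℝ) • !![1, 0, 3; -1, 0, 1; 3, 0, 1]]

/-- `EM = diag(B₁, B₂, B₃)` as a linear map on `ℝ³ ⊗ ℝ³` (basis indexed by pairs, via
`e_i ⊗ e_j ↦ e_{3(i−1)+j}`). -/
noncomputable def EM : Matrix (Fin 3 × Fin 3) (Fin 3 × Fin 3) ℝ :=
  fun p q => if p.1 = q.1 then Bblk p.1 p.2 q.2 else 0

/-- `EM_{i,j}`: the operator on `(ℝ³)^{⊗n}` acting as `EM` on the `i`-th and `j`-th tensor
factors (in that order) and as the identity elsewhere. -/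
noncomputable def EMop (n : ℕ) (i j : Fin n) :
    Matrix (Fin n → Fin 3) (Fin n → Fin 3) ℝ :=
  fun x y => EM (x i, x j) (y i, y j) *
    ∏ k ∈ Finset.univ.filter fun k => k ≠ i ∧ k ≠ j, (if x k = y k then (1 : ℝ) else 0)

/-- The `n`-fold tensor power `v^{⊗n}` of `v ∈ ℝ³`. -/
def tpow (n : ℕ) (v : Fin 3 → ℝ) : (Fin n → Fin 3) → ℝ := fun x => ∏ k, v (x k)

def v12 : Fin 3 → ℝ := ![1, 1, 0]
def v13 : Fin 3 → ℝ := ![1, 0, 1]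

/-!
After splitting off the coordinates `i, j`, the factor `EM_{i,j}` becomes `EM ⊗ 1`, and `EM` is a
contraction for the Euclidean norm that is isometric only on its fixed vectors: `‖u‖² - ‖EM u‖²`
is an explicit sum of squares vanishing exactly when `EM u = u`. This rigidity passes to Kronecker
products with an identity, to conjugates by coordinate permutations and to products, hence to
`LT`. So every eigenvalue of `LT` has modulus at most `1`, an eigenvalue of modulus `1` has an
eigenvector fixed by `LT` and therefore equals `1`, and a vector fixed by `LT` is fixed by every
factor `EM_{i,i+1}`. The latter means five linear relations on each `(i, i+1)`-slice. By induction
on the number of zero coordinates they determine a common fixed vector from its values at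
`(1,…,1)` and `(2,…,2)`: a zero at `j` is removed using the relations of the pair `(j-1, j)`, and
without zeros either the configuration is constant or it contains an adjacent `12` or `21`, whose
relation forces the value `0`. Finally `v₁₂^{⊗n}` and `v₁₃^{⊗n}` are common fixed vectors separated
by these two values.
-/

open Complex Function
open scoped Kronecker

section Kronecker

variable {ι κ R : Type*} [Fintype ι] [Fintype κ] [DecidableEq κ] [NonAssocSemiring R]

lemma Matrix.kronecker_one_mulVec_apply (A : Matrix ι ι R) (x : ι × κ → R) (i : ι) (k : κ) :
    ((A ⊗ₖ (1 : Matrix κ κ R)) *ᵥ x) (i, k) = (A *ᵥ fun j => x (j, k)) i := by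
  simp [mulVec, dotProduct, Fintype.sum_prod_type, one_apply]

lemma Matrix.kronecker_one_mulVec_eq_self_iff (A : Matrix ι ι R) (x : ι × κ → R) :
    (A ⊗ₖ (1 : Matrix κ κ R)) *ᵥ x = x ↔ ∀ k, A *ᵥ (fun i => x (i, k)) = fun i => x (i, k) := by
  simp only [funext_iff, Prod.forall, kronecker_one_mulVec_apply]
  exact forall_comm

end Kronecker

section RigidContraction

variable {ι κ : Type*} [Fintype ι] [Fintype κ]

noncomputable def sqNorm (x : ι → ℂ) : ℝ := ∑ i, ‖x i‖ ^ 2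

lemma sqNorm_smul (c : ℂ) (x : ι → ℂ) : sqNorm (c • x) = ‖c‖ ^ 2 * sqNorm x := by
  simp [sqNorm, Finset.mul_sum, mul_pow]

lemma sqNorm_pos {x : ι → ℂ} (hx : x ≠ 0) : 0 < sqNorm x := by
  obtain ⟨i, hi⟩ := ne_iff.1 hx
  exact (pow_pos (norm_pos_iff.2 hi) 2).trans_le
    (Finset.single_le_sum (fun j _ => sq_nonneg ‖x j‖) (Finset.mem_univ i))

lemma sqNorm_comp_equiv (x : ι → ℂ) (e : κ ≃ ι) : sqNorm (x ∘ e) = sqNorm x :=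
  e.sum_comp fun i => ‖x i‖ ^ 2

lemma sqNorm_eq_sum_slices (x : ι × κ → ℂ) : sqNorm x = ∑ k, sqNorm fun i => x (i, k) :=
  Fintype.sum_prod_type_right _

structure IsRigidContraction (A : Matrix ι ι ℂ) : Prop where
  sqNorm_mulVec_le : ∀ x, sqNorm (A *ᵥ x) ≤ sqNorm x
  mulVec_eq_self : ∀ x, sqNorm (A *ᵥ x) = sqNorm x → A *ᵥ x = x

namespace IsRigidContraction

variable {A B : Matrix ι ι ℂ}

lemma one [DecidableEq ι] : IsRigidContraction (1 : Matrix ι ι ℂ) :=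
  ⟨fun x => by rw [one_mulVec], fun x _ => one_mulVec x⟩

lemma mulVec_eq_self_of_mul (hA : IsRigidContraction A) (hB : IsRigidContraction B)
    {x : ι → ℂ} (h : sqNorm ((A * B) *ᵥ x) = sqNorm x) : A *ᵥ x = x ∧ B *ᵥ x = x := by
  rw [← mulVec_mulVec] at h
  have hBx : B *ᵥ x = x :=
    hB.mulVec_eq_self x (le_antisymm (hB.sqNorm_mulVec_le x) (h ▸ hA.sqNorm_mulVec_le _))
  rw [hBx] at h
  exact ⟨hA.mulVec_eq_self x h, hBx⟩

lemma mul (hA : IsRigidContraction A) (hB : IsRigidContraction B) :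
    IsRigidContraction (A * B) where
  sqNorm_mulVec_le x := by
    rw [← mulVec_mulVec]
    exact (hA.sqNorm_mulVec_le _).trans (hB.sqNorm_mulVec_le x)
  mulVec_eq_self x h := by
    obtain ⟨hAx, hBx⟩ := mulVec_eq_self_of_mul hA hB h
    rw [← mulVec_mulVec, hBx, hAx]

lemma list_prod [DecidableEq ι] {L : List (Matrix ι ι ℂ)}
    (hL : ∀ A ∈ L, IsRigidContraction A) : IsRigidContraction L.prod := by
  induction L with
  | nil => exact one
  | cons A L ih =>
    exact (hL A List.mem_cons_self).mul (ih fun B hB => hL B (List.mem_cons_of_mem A hB))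

lemma mulVec_eq_self_of_list_prod [DecidableEq ι] {L : List (Matrix ι ι ℂ)}
    (hL : ∀ A ∈ L, IsRigidContraction A) {x : ι → ℂ} (hx : L.prod *ᵥ x = x) :
    ∀ A ∈ L, A *ᵥ x = x := by
  induction L with
  | nil => simp
  | cons A L ih =>
    have hL' : ∀ B ∈ L, IsRigidContraction B := fun B hB => hL B (List.mem_cons_of_mem A hB)
    rw [List.prod_cons] at hx
    obtain ⟨hAx, hPx⟩ := mulVec_eq_self_of_mul (hL A List.mem_cons_self) (list_prod hL')
      (congrArg sqNorm hx)
    exact List.forall_mem_cons.2 ⟨hAx, ih hL' hPx⟩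

lemma norm_lt_one_of_mulVec_eq_smul (hA : IsRigidContraction A) {μ : ℂ} {v : ι → ℂ}
    (hv : v ≠ 0) (hAv : A *ᵥ v = μ • v) (hμ : μ ≠ 1) : ‖μ‖ < 1 := by
  have hle := hA.sqNorm_mulVec_le v
  rw [hAv, sqNorm_smul] at hle
  have hne : ‖μ‖ ^ 2 ≠ 1 := fun h1 => by
    have hfix := hA.mulVec_eq_self v (by rw [hAv, sqNorm_smul, h1, one_mul])
    rw [hAv] at hfix
    have : (μ - 1) • v = 0 := by rw [sub_smul, one_smul, hfix, sub_self]
    exact (smul_eq_zero.1 this).elim (fun h => hμ (sub_eq_zero.1 h)) hv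
  have hlt : ‖μ‖ ^ 2 < 1 :=
    lt_of_le_of_ne (le_of_mul_le_mul_right (by rwa [one_mul]) (sqNorm_pos hv)) hne
  exact (sq_lt_one_iff₀ (norm_nonneg μ)).1 hlt

lemma submatrix_equiv (hA : IsRigidContraction A) (e : κ ≃ ι) :
    IsRigidContraction (A.submatrix e e) where
  sqNorm_mulVec_le x := by
    rw [submatrix_mulVec_equiv, sqNorm_comp_equiv, ← sqNorm_comp_equiv x e.symm]
    exact hA.sqNorm_mulVec_le _
  mulVec_eq_self x h := by
    rw [submatrix_mulVec_equiv, sqNorm_comp_equiv, ← sqNorm_comp_equiv x e.symm] at h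
    rw [submatrix_mulVec_equiv, hA.mulVec_eq_self _ h, comp_assoc,
      e.symm_comp_self, comp_id]

end IsRigidContraction

lemma IsRigidContraction.kronecker_one [DecidableEq κ] {A : Matrix ι ι ℂ}
    (hA : IsRigidContraction A) : IsRigidContraction (A ⊗ₖ (1 : Matrix κ κ ℂ)) where
  sqNorm_mulVec_le x := by
    simp only [sqNorm_eq_sum_slices, kronecker_one_mulVec_apply]
    exact Finset.sum_le_sum fun k _ => hA.sqNorm_mulVec_le _
  mulVec_eq_self x h := by
    simp only [sqNorm_eq_sum_slices, kronecker_one_mulVec_apply] at h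
    rw [Finset.sum_eq_sum_iff_of_le fun k _ => hA.sqNorm_mulVec_le _] at h
    funext ⟨i, k⟩
    rw [kronecker_one_mulVec_apply, hA.mulVec_eq_self _ (h k (Finset.mem_univ k))]

end RigidContraction

lemma Matrix.exists_mulVec_eq_smul_of_isRoot_charpoly {ι K : Type*} [Fintype ι] [DecidableEq ι]
    [Field K] {A : Matrix ι ι K} {μ : K} (h : A.charpoly.IsRoot μ) : ∃ v ≠ 0, A *ᵥ v = μ • v := by
  obtain ⟨v, hv, hAv⟩ := (exists_mulVec_eq_zero_iff (M := scalar ι μ - A)).2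
    (by rw [← eval_charpoly]; exact h.eq_zero)
  refine ⟨v, hv, ?_⟩
  rw [sub_mulVec, sub_eq_zero] at hAv
  simpa [scalar_apply] using hAv.symm

lemma Matrix.list_prod_mulVec_eq_self {ι R : Type*} [Fintype ι] [DecidableEq ι] [CommSemiring R]
    {L : List (Matrix ι ι R)} {x : ι → R} (h : ∀ A ∈ L, A *ᵥ x = x) : L.prod *ᵥ x = x := by
  induction L with
  | nil => exact one_mulVec x
  | cons A L ih =>
    rw [List.prod_cons, ← mulVec_mulVec, ih fun B hB => h B (List.mem_cons_of_mem A hB),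
      h A List.mem_cons_self]

lemma Matrix.map_ofReal_mulVec {ι : Type*} [Fintype ι] (A : Matrix ι ι ℝ) (x : ι → ℝ) :
    A.map ofReal *ᵥ (ofReal ∘ x) = ofReal ∘ (A *ᵥ x) :=
  funext fun i => (RingHom.map_mulVec ofRealHom A x i).symm

section RealMatrices

variable {ι : Type*} [Fintype ι] [DecidableEq ι] {L : List (Matrix ι ι ℝ)}

lemma Matrix.list_prod_map_ofReal :
    L.prod.map ofReal = (L.map (·.map ofReal)).prod :=
  map_list_prod (ofRealHom.mapMatrix : Matrix ι ι ℝ →+* Matrix ι ι ℂ) L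

lemma isRigidContraction_list_prod_map_ofReal
    (hL : ∀ A ∈ L, IsRigidContraction (A.map ofReal)) : IsRigidContraction (L.prod.map ofReal) := by
  rw [list_prod_map_ofReal]
  exact IsRigidContraction.list_prod (by simpa using hL)

lemma mulVec_eq_self_of_list_prod_mulVec_eq_self
    (hL : ∀ A ∈ L, IsRigidContraction (A.map ofReal)) {x : ι → ℝ} (hx : L.prod *ᵥ x = x) :
    ∀ A ∈ L, A *ᵥ x = x := by
  have hxc : (L.map (·.map ofReal)).prod *ᵥ (ofReal ∘ x) = ofReal ∘ x := by
    rw [← list_prod_map_ofReal, map_ofReal_mulVec, hx]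
  intro A hA
  have hAx := IsRigidContraction.mulVec_eq_self_of_list_prod (by simpa using hL) hxc _
    (List.mem_map_of_mem hA)
  rw [map_ofReal_mulVec] at hAx
  exact ofReal_injective.comp_left hAx

end RealMatrices

section SplitPair

variable {α β : Type*} [DecidableEq α] {i j : α}

def splitPair (hij : i ≠ j) : (α → β) ≃ (β × β) × ({k // k ≠ i ∧ k ≠ j} → β) where
  toFun z := ((z i, z j), fun k => z k)
  invFun pw k := if hi : k = i then pw.1.1 else if hj : k = j then pw.1.2 else pw.2 ⟨k, hi, hj⟩
  left_inv z := by
    funext k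
    by_cases hi : k = i
    · simp [hi]
    · by_cases hj : k = j <;> simp [hi, hj, hij.symm]
  right_inv pw := Prod.ext (by simp [hij.symm]) (funext fun k => by simp [k.2.1, k.2.2])

lemma splitPair_symm_apply_restrict (hij : i ≠ j) (y : α → β) (p : β × β) :
    (splitPair hij).symm (p, fun k => y k) = update (update y i p.1) j p.2 := by
  funext k
  by_cases hi : k = i
  · simp [splitPair, hi, hij]
  · by_cases hj : k = j <;> simp [splitPair, hi, hj, hij.symm]

lemma prod_splitPair_symm [Fintype α] {M : Type*} [CommMonoid M] (hij : i ≠ j) (f : β → M)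
    (p : β × β) (w : {k // k ≠ i ∧ k ≠ j} → β) :
    ∏ k, f ((splitPair hij).symm (p, w) k) = f p.1 * f p.2 * ∏ k, f (w k) := by
  have hj : j ∈ Finset.univ.erase i := Finset.mem_erase.2 ⟨hij.symm, Finset.mem_univ j⟩
  rw [← Finset.mul_prod_erase _ _ (Finset.mem_univ i), ← Finset.mul_prod_erase _ _ hj,
    ← mul_assoc, Finset.prod_subtype _ (p := fun k => k ≠ i ∧ k ≠ j) (by simp [and_comm])]
  congr 1
  · simp [splitPair, hij.symm]
  · exact Finset.prod_congr rfl fun k _ => by simp [splitPair, k.2.1, k.2.2]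

end SplitPair

open Finset in
lemma card_filter_update_lt {α β : Type*} [Fintype α] [DecidableEq α] [DecidableEq β]
    {y : α → β} {j : α} {b c : β} (hj : y j = b) (hc : c ≠ b) :
    #{k | update y j c k = b} < #{k | y k = b} := by
  refine card_lt_card ((ssubset_iff_of_subset fun k hk => ?_).2 ⟨j, by simp [hj], by simp [hc]⟩)
  simp only [mem_filter, mem_univ, true_and] at hk ⊢
  rcases eq_or_ne k j with rfl | hkj
  · simp [hc] at hk
  · rwa [update_of_ne hkj] at hk

lemma update_update_eq_self {α β : Type*} [DecidableEq α] {y : α → β} {i j : α} {a b : β}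
    (ha : y i = a) (hb : y j = b) : update (update y i a) j b = y := by
  subst ha hb
  simp

lemma update_update_eq_update {α β : Type*} [DecidableEq α] {y : α → β} {i j : α} {a b : β}
    (ha : y i = a) : update (update y i a) j b = update y j b := by
  subst ha
  simp

lemma Fin.eq_zero_or_eq_one_or_eq_two (a : Fin 3) : a = 0 ∨ a = 1 ∨ a = 2 := by
  fin_cases a <;> simp

section CyclicFin

variable {n : ℕ} (hn : 1 < n)
include hn

lemma Fin.ne_add_mk_one (i : Fin n) : i ≠ i + ⟨1, hn⟩ := by
  intro h
  have hv := congrArg Fin.val h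
  rw [Fin.val_add] at hv
  rcases Nat.lt_or_ge (i.val + 1) n with hlt | hge
  · rw [Nat.mod_eq_of_lt hlt] at hv
    omega
  · rw [show i.val + 1 = n by omega, Nat.mod_self] at hv
    omega

lemma Fin.apply_eq_of_forall_apply_add_one_eq {β : Type*} {y : Fin n → β}
    (h : ∀ i, y (i + ⟨1, hn⟩) = y i) (k l : Fin n) : y k = y l := by
  have key : ∀ m (hm : m < n), y ⟨m, hm⟩ = y ⟨0, by omega⟩ := by
    intro m
    induction m with
    | zero => intro _; rfl
    | succ m ih =>
      intro hm
      rw [← ih (by omega), ← h ⟨m, by omega⟩]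
      congr 1
      ext
      simp [Fin.val_add, Nat.mod_eq_of_lt hm]
  exact (key k k.2).trans (key l l.2).symm

end CyclicFin

-- `‖u‖² - ‖EM u‖²` written block by block as a sum of squares.
noncomputable def emDefect (u : Fin 3 × Fin 3 → ℂ) : ℝ :=
  5 / 16 * ‖u (0, 0) - u (0, 1) - u (0, 2)‖ ^ 2 + 5 / 16 * ‖u (1, 0) - u (1, 1)‖ ^ 2
    + ‖u (1, 2)‖ ^ 2 + 5 / 16 * ‖u (2, 0) - u (2, 2)‖ ^ 2 + ‖u (2, 1)‖ ^ 2

lemma sqNorm_sub_sqNorm_EM_mulVec (u : Fin 3 × Fin 3 → ℂ) :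
    sqNorm u - sqNorm (EM.map ofReal *ᵥ u) = emDefect u := by
  simp only [sqNorm, emDefect, Fintype.sum_prod_type, Fin.sum_univ_three, mulVec, dotProduct,
    map_apply, EM, Bblk, Complex.sq_norm]
  simp [normSq_apply]
  ring

lemma emDefect_nonneg (u : Fin 3 × Fin 3 → ℂ) : 0 ≤ emDefect u := by
  unfold emDefect; positivity

lemma EM_mulVec_eq_self_of_emDefect_eq_zero {u : Fin 3 × Fin 3 → ℂ} (h : emDefect u = 0) :
    EM.map ofReal *ᵥ u = u := by
  simp only [emDefect] at h
  repeat rw [add_eq_zero_iff_of_nonneg (by positivity) (by positivity)] at h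
  simp only [mul_eq_zero, norm_eq_zero, sub_eq_zero, OfNat.ofNat_ne_zero, div_eq_zero_iff,
    false_or, pow_eq_zero_iff, ne_eq, not_false_eq_true] at h
  obtain ⟨⟨⟨⟨h0, h1⟩, h12⟩, h2⟩, h21⟩ := h
  rw [sub_eq_iff_eq_add'] at h0
  ext ⟨a, b⟩
  fin_cases a <;> fin_cases b <;>
    simp [mulVec, dotProduct, EM, Bblk, Fintype.sum_prod_type, Fin.sum_univ_three, h0, h1, h12,
      h2, h21] <;> ring

lemma isRigidContraction_EM : IsRigidContraction (EM.map ofReal) where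
  sqNorm_mulVec_le u := by linarith [sqNorm_sub_sqNorm_EM_mulVec u, emDefect_nonneg u]
  mulVec_eq_self u h :=
    EM_mulVec_eq_self_of_emDefect_eq_zero (by rw [← sqNorm_sub_sqNorm_EM_mulVec, h, sub_self])

lemma relations_of_EM_mulVec_eq_self {u : Fin 3 × Fin 3 → ℝ} (h : EM *ᵥ u = u) :
    u (0, 0) = u (0, 1) + u (0, 2) ∧ u (1, 0) = u (1, 1) ∧ u (1, 2) = 0 ∧
      u (2, 0) = u (2, 2) ∧ u (2, 1) = 0 := by
  have h00 := congrFun h (0, 0)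
  have h10 := congrFun h (1, 0)
  have h12 := congrFun h (1, 2)
  have h20 := congrFun h (2, 0)
  have h21 := congrFun h (2, 1)
  simp [mulVec, dotProduct, EM, Bblk, Fintype.sum_prod_type, Fin.sum_univ_three]
    at h00 h10 h12 h20 h21
  exact ⟨by linarith, by linarith, by linarith, by linarith, by linarith⟩

lemma EM_mulVec_tensor_self {v : Fin 3 → ℝ} (hv : v 0 = v 1 + v 2) (h12 : v 1 * v 2 = 0) :
    EM *ᵥ (fun p => v p.1 * v p.2) = fun p => v p.1 * v p.2 := by
  ext ⟨a, b⟩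
  fin_cases a <;> fin_cases b <;>
    simp [mulVec, dotProduct, EM, Bblk, Fintype.sum_prod_type, Fin.sum_univ_three, hv] <;>
    ring_nf <;> simp [h12, mul_comm (v 2) (v 1)]

section EMop

variable {n : ℕ} {i j : Fin n}

lemma EMop_eq_submatrix (hij : i ≠ j) :
    EMop n i j = (EM ⊗ₖ 1).submatrix (splitPair hij) (splitPair hij) := by
  ext x y
  simp only [EMop, submatrix_apply, kroneckerMap_apply, one_apply, Finset.prod_boole]
  congr 2
  simp [splitPair, funext_iff]

lemma EMop_mulVec_eq_self_iff (hij : i ≠ j) {x : (Fin n → Fin 3) → ℝ} :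
    EMop n i j *ᵥ x = x ↔ ∀ w, EM *ᵥ (fun p => x ((splitPair hij).symm (p, w))) =
      fun p => x ((splitPair hij).symm (p, w)) := by
  rw [EMop_eq_submatrix hij, submatrix_mulVec_equiv, ← Equiv.eq_comp_symm,
    kronecker_one_mulVec_eq_self_iff]
  rfl

lemma EM_mulVec_slice_eq_self (hij : i ≠ j) {x : (Fin n → Fin 3) → ℝ}
    (hx : EMop n i j *ᵥ x = x) (y : Fin n → Fin 3) :
    EM *ᵥ (fun p => x (update (update y i p.1) j p.2)) =
      fun p => x (update (update y i p.1) j p.2) := by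
  simpa only [splitPair_symm_apply_restrict] using (EMop_mulVec_eq_self_iff hij).1 hx fun k => y k

lemma EMop_mulVec_tpow (hij : i ≠ j) {v : Fin 3 → ℝ}
    (hv : EM *ᵥ (fun p => v p.1 * v p.2) = fun p => v p.1 * v p.2) :
    EMop n i j *ᵥ tpow n v = tpow n v := by
  refine (EMop_mulVec_eq_self_iff hij).2 fun w => ?_
  have hslice : (fun p => tpow n v ((splitPair hij).symm (p, w))) =
      (∏ k, v (w k)) • fun p => v p.1 * v p.2 := by
    funext p
    simp [tpow, prod_splitPair_symm, mul_comm]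
  rw [hslice, mulVec_smul, hv]

lemma isRigidContraction_EMop (hij : i ≠ j) : IsRigidContraction ((EMop n i j).map ofReal) := by
  rw [EMop_eq_submatrix hij, ← submatrix_map]
  convert isRigidContraction_EM.kronecker_one.submatrix_equiv (splitPair hij) using 2
  ext
  simp [one_apply, apply_ite ofReal]

end EMop

section CyclicRelations

variable {n : ℕ} (hn : 1 < n)
include hn

variable {d : (Fin n → Fin 3) → ℝ} (hfix : ∀ i, EMop n i (i + ⟨1, hn⟩) *ᵥ d = d)
include hfix

lemma apply_eq_zero_of_apply_update_eq_zero {y : Fin n → Fin 3} {j : Fin n} (hj : y j = 0)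
    (hupd : ∀ c ≠ 0, d (update y j c) = 0) : d y = 0 := by
  have : NeZero n := ⟨by omega⟩
  obtain ⟨c00, c10, -, c20, -⟩ := relations_of_EM_mulVec_eq_self
    (EM_mulVec_slice_eq_self (Fin.ne_add_mk_one hn (j - ⟨1, hn⟩)) (hfix _) y)
  simp only [sub_add_cancel] at c00 c10 c20
  rcases Fin.eq_zero_or_eq_one_or_eq_two (y (j - ⟨1, hn⟩)) with hi | hi | hi
  · rw [update_update_eq_self hi hj, update_update_eq_update hi, update_update_eq_update hi] at c00
    rw [c00, hupd 1 (by decide), hupd 2 (by decide), add_zero]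
  · rw [update_update_eq_self hi hj, update_update_eq_update hi] at c10
    rw [c10, hupd 1 (by decide)]
  · rw [update_update_eq_self hi hj, update_update_eq_update hi] at c20
    rw [c20, hupd 2 (by decide)]

lemma apply_eq_zero_of_forall_ne_zero (h1 : d (fun _ => 1) = 0) (h2 : d (fun _ => 2) = 0)
    {y : Fin n → Fin 3} (hy : ∀ k, y k ≠ 0) : d y = 0 := by
  by_cases hconst : ∀ i, y (i + ⟨1, hn⟩) = y i
  · let k₀ : Fin n := ⟨0, by omega⟩
    have hy' : y = fun _ => y k₀ :=
      funext fun k => Fin.apply_eq_of_forall_apply_add_one_eq hn hconst k k₀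
    rcases Fin.eq_zero_or_eq_one_or_eq_two (y k₀) with h0 | h0 | h0
    · exact absurd h0 (hy k₀)
    · rw [hy', h0, h1]
    · rw [hy', h0, h2]
  · push Not at hconst
    obtain ⟨i, hi⟩ := hconst
    obtain ⟨-, -, c12, -, c21⟩ := relations_of_EM_mulVec_eq_self
      (EM_mulVec_slice_eq_self (Fin.ne_add_mk_one hn i) (hfix i) y)
    rcases Fin.eq_zero_or_eq_one_or_eq_two (y i) with ha | ha | ha <;>
      rcases Fin.eq_zero_or_eq_one_or_eq_two (y (i + ⟨1, hn⟩)) with hb | hb | hb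
    all_goals first
      | exact absurd ha (hy _) | exact absurd hb (hy _) | exact absurd (hb.trans ha.symm) hi
      | skip
    · rwa [update_update_eq_self ha hb] at c12
    · rwa [update_update_eq_self ha hb] at c21

open Finset in
lemma eq_zero_of_forall_EMop_mulVec_eq_self (h1 : d (fun _ => 1) = 0)
    (h2 : d (fun _ => 2) = 0) : d = 0 := by
  funext y
  induction hm : #{k | y k = 0} using Nat.strong_induction_on generalizing y with
  | _ m ih =>
  by_cases hz : ∃ j, y j = 0
  · obtain ⟨j, hj⟩ := hz
    exact apply_eq_zero_of_apply_update_eq_zero hn hfix hj fun c hc =>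
      ih _ (hm ▸ card_filter_update_lt hj hc) _ rfl
  · exact apply_eq_zero_of_forall_ne_zero hn hfix h1 h2 (not_exists.1 hz)

end CyclicRelations

lemma tpow_const (n : ℕ) (v : Fin 3 → ℝ) (c : Fin 3) : tpow n v (fun _ => c) = v c ^ n := by
  simp [tpow]

lemma linearIndependent_tpow_v12_v13 {n : ℕ} (hn : n ≠ 0) :
    LinearIndependent ℝ ![tpow n v12, tpow n v13] := by
  refine LinearIndependent.pair_iff.2 fun s t hst => ⟨?_, ?_⟩
  · simpa [tpow_const, v12, v13, hn] using congrFun hst fun _ => 1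
  · simpa [tpow_const, v12, v13, hn] using congrFun hst fun _ => 2

section Layer

variable {n : ℕ} (hn : 1 < n)

noncomputable def layerFactors : List (Matrix (Fin n → Fin 3) (Fin n → Fin 3) ℝ) :=
  (List.ofFn fun i : Fin n => EMop n i (i + ⟨1, hn⟩)).reverse

lemma mem_layerFactors {A : Matrix (Fin n → Fin 3) (Fin n → Fin 3) ℝ} :
    A ∈ layerFactors hn ↔ ∃ i, EMop n i (i + ⟨1, hn⟩) = A := by
  simp [layerFactors, List.mem_ofFn]

lemma isRigidContraction_of_mem_layerFactors {A : Matrix (Fin n → Fin 3) (Fin n → Fin 3) ℝ}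
    (hA : A ∈ layerFactors hn) : IsRigidContraction (A.map ofReal) := by
  obtain ⟨i, rfl⟩ := (mem_layerFactors hn).1 hA
  exact isRigidContraction_EMop (Fin.ne_add_mk_one hn i)

lemma layerFactors_prod_mulVec_tpow {v : Fin 3 → ℝ} (hv : v 0 = v 1 + v 2) (h12 : v 1 * v 2 = 0) :
    (layerFactors hn).prod *ᵥ tpow n v = tpow n v := by
  refine list_prod_mulVec_eq_self fun A hA => ?_
  obtain ⟨i, rfl⟩ := (mem_layerFactors hn).1 hA
  exact EMop_mulVec_tpow (Fin.ne_add_mk_one hn i) (EM_mulVec_tensor_self hv h12)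

lemma eq_of_layerFactors_prod_mulVec_eq_self {x : (Fin n → Fin 3) → ℝ}
    (hx : (layerFactors hn).prod *ᵥ x = x) :
    x = x (fun _ => 1) • tpow n v12 + x (fun _ => 2) • tpow n v13 := by
  have hfactors := mulVec_eq_self_of_list_prod_mulVec_eq_self
    (fun A hA => isRigidContraction_of_mem_layerFactors hn hA) hx
  rw [← sub_eq_zero]
  refine eq_zero_of_forall_EMop_mulVec_eq_self hn (fun i => ?_) ?_ ?_
  · have hij := Fin.ne_add_mk_one hn i
    rw [mulVec_sub, mulVec_add, mulVec_smul, mulVec_smul,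
      hfactors _ ((mem_layerFactors hn).2 ⟨i, rfl⟩),
      EMop_mulVec_tpow hij (EM_mulVec_tensor_self (by simp [v12]) (by simp [v12])),
      EMop_mulVec_tpow hij (EM_mulVec_tensor_self (by simp [v13]) (by simp [v13]))]
  all_goals simp [tpow_const, v12, v13, show n ≠ 0 by omega]

end Layer

/-- for `n ≥ 3`, the layer operator
`LT = EM_{n,1} ∘ EM_{n−1,n} ∘ ⋯ ∘ EM_{2,3} ∘ EM_{1,2}` has `1` as an eigenvalue, its eigenspace
`{x : LT·x = x}` equals `span{v₁₂^{⊗n}, v₁₃^{⊗n}}` (in particular the eigenvalue `1` has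
geometric multiplicity `2`), and every complex eigenvalue `λ ≠ 1` of `LT` satisfies `|λ| < 1`. -/
theorem stmt13 (n : ℕ) (hn : 3 ≤ n)
    (LT : Matrix (Fin n → Fin 3) (Fin n → Fin 3) ℝ)
    (hLT : LT =
      ((List.ofFn fun i : Fin n => EMop n i (i + ⟨1, by omega⟩)).reverse).prod) :
    (∃ x : (Fin n → Fin 3) → ℝ, x ≠ 0 ∧ LT.mulVec x = x) ∧
    ({x : (Fin n → Fin 3) → ℝ | LT.mulVec x = x} =
      ↑(Submodule.span ℝ {tpow n v12, tpow n v13})) ∧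
    (Module.finrank ℝ ↥(Submodule.span ℝ {tpow n v12, tpow n v13}) = 2) ∧
    (∀ μ : ℂ, ((LT.map (Complex.ofReal)).charpoly).IsRoot μ → μ ≠ 1 → ‖μ‖ < 1) := by
  have hn1 : 1 < n := by omega
  obtain rfl : LT = (layerFactors hn1).prod := hLT
  have hli := linearIndependent_tpow_v12_v13 (show n ≠ 0 by omega)
  have fix12 := layerFactors_prod_mulVec_tpow hn1 (v := v12) (by simp [v12]) (by simp [v12])
  have fix13 := layerFactors_prod_mulVec_tpow hn1 (v := v13) (by simp [v13]) (by simp [v13])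
  refine ⟨⟨tpow n v12, hli.ne_zero 0, fix12⟩, ?_, ?_, fun μ hμ hμ1 => ?_⟩
  · ext x
    simp only [Set.mem_ofPred_eq, SetLike.mem_coe, Submodule.mem_span_pair]
    refine ⟨fun hx => ⟨_, _, (eq_of_layerFactors_prod_mulVec_eq_self hn1 hx).symm⟩, ?_⟩
    rintro ⟨a, b, rfl⟩
    rw [mulVec_add, mulVec_smul, mulVec_smul, fix12, fix13]
  · rw [← range_cons_cons_empty _ _ ![], finrank_span_eq_card hli, Fintype.card_fin]
  · obtain ⟨v, hv, hAv⟩ := exists_mulVec_eq_smul_of_isRoot_charpoly hμ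
    exact (isRigidContraction_list_prod_map_ofReal fun A hA =>
      isRigidContraction_of_mem_layerFactors hn1 hA).norm_lt_one_of_mulVec_eq_smul hv hAv hμ1
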